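/- arXiv:2507.19649 — 3 statements merged into one kernel-verified Lean document; each statement's English description precedes it below -/
import Mathlib

section
/- Fix $k \ge 1$ and a scaling factor $f \in [0,1)$. Suppose a player $n$ has target probability $\hat x_n$, the events $\{A_i\}_{i \in P}$ (seed acceptance events for overlapping earlier players) are mutually independent with $\mathbb{E}[\sum_{i \in P} \mathbb{I}_{A_i}] \le f \cdot k$, the seed event $A_n$ for player $n$ is independent of the $A_i$'s with $\mathbb{P}[A_n] = f \hat x_n$, and the allocation event $E_n$ satisfies $E_n \supseteq A_n \cap \{\sum_{i \in P} \mathbb{I}_{A_i} < k\}$. Then $\mathbb{P}[E_n] \ge f \cdot \left(1 - \exp\left(-\frac{(k - fk)^2}{fk + k}\right)\right) \cdot \hat x_n$. -/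
/-!
Player `n`'s seed is accepted with probability `f x̂`, independently of the number `S` of
accepted earlier seeds, so it suffices to bound `ℙ[S ≥ k]`.
For independent indicators `E e^{tS} ≤ exp ((e^t - 1) E S)`; Markov's inequality at
`t = -log f` gives `ℙ[S ≥ k] ≤ exp (k (log f + 1 - f))`, and `log (1/f) ≥ 2 (1 - f) / (1 + f)`
turns this into the stated exponent.
-/

open MeasureTheory ProbabilityTheory Real

lemma two_mul_one_sub_div_one_add_le_neg_log {f : ℝ} (hf0 : 0 < f) (hf1 : f < 1) :
    2 * (1 - f) / (1 + f) ≤ -log f := by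
  -- `log (1/f) = 2 ∑ r^(2j+1) / (2j+1)` with `r = (1 - f) / (1 + f)`; keep the first term.
  have hs := hasSum_log_one_add_inv (div_pos hf0 (sub_pos.2 hf1))
  have hlog : 1 + (f / (1 - f))⁻¹ = f⁻¹ := by
    field_simp [(sub_pos.2 hf1).ne']
    ring
  have hratio : 1 / (2 * (f / (1 - f)) + 1) = (1 - f) / (1 + f) := by
    have h : 2 * (f / (1 - f)) + 1 = (1 + f) / (1 - f) := by
      field_simp [(sub_pos.2 hf1).ne']
      ring
    rw [h, one_div_div]
  have hnonneg : 0 ≤ (1 - f) / (1 + f) := div_nonneg (by linarith) (by linarith)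
  rw [hlog, log_inv, hratio] at hs
  simpa [mul_div_assoc] using
    le_hasSum hs 0 fun j _ => mul_nonneg (by positivity) (pow_nonneg hnonneg _)

lemma mul_log_add_one_sub_le {f a : ℝ} (hf0 : 0 < f) (hf1 : f < 1) (ha : 0 ≤ a) :
    a * (log f + 1 - f) ≤ -(a - f * a) ^ 2 / (f * a + a) := by
  have key : log f + 1 - f ≤ -(1 - f) ^ 2 / (1 + f) := by
    have e : -(1 - f) ^ 2 / (1 + f) = 1 - f - 2 * (1 - f) / (1 + f) := by
      field_simp
      ring
    linarith [two_mul_one_sub_div_one_add_le_neg_log hf0 hf1]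
  calc a * (log f + 1 - f) ≤ a * (-(1 - f) ^ 2 / (1 + f)) := mul_le_mul_of_nonneg_left key ha
    _ = -(a - f * a) ^ 2 / (f * a + a) := by
      rcases ha.eq_or_lt with rfl | ha
      · simp
      field_simp
      ring

namespace ProbabilityTheory

variable {Ω ι : Type*} [MeasurableSpace Ω] {μ : Measure Ω} {A : ι → Set Ω}

lemma iIndepSet.indep_generateFrom_option_elim {B : Set Ω} (hB : MeasurableSet B)
    (hA : ∀ i, MeasurableSet (A i)) (h : iIndepSet (fun o : Option ι => o.elim B A) μ) :
    Indep (MeasurableSpace.generateFrom {B}) (MeasurableSpace.generateFrom (Set.range A)) μ := by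
  convert h.indep_generateFrom_of_disjoint (fun o => o.rec hB hA) {none} (Set.range some)
    (by simp) using 2
  · ext t
    simp [eq_comm]
  · ext t
    simp

lemma iIndepSet.measure_inter_sum_indicator_lt [Fintype ι] {B : Set Ω} (hB : MeasurableSet B)
    (hA : ∀ i, MeasurableSet (A i)) (h : iIndepSet (fun o : Option ι => o.elim B A) μ) (c : ℝ) :
    μ (B ∩ {ω | ∑ i, (A i).indicator (fun _ => 1) ω < c}) =
      μ B * μ {ω | ∑ i, (A i).indicator (fun _ => 1) ω < c} := by
  have hS : Measurable[MeasurableSpace.generateFrom (Set.range A)]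
      fun ω => ∑ i, (A i).indicator (fun _ => (1 : ℝ)) ω :=
    Finset.measurable_sum _ fun i _ =>
      measurable_const.indicator (MeasurableSpace.measurableSet_generateFrom ⟨i, rfl⟩)
  exact (Indep_iff _ _ _).1 (h.indep_generateFrom_option_elim hB hA) _ _
    (MeasurableSpace.measurableSet_generateFrom rfl) (measurableSet_lt hS measurable_const)

variable [IsProbabilityMeasure μ]

lemma mgf_indicator_one {s : Set Ω} (hs : MeasurableSet s) (t : ℝ) :
    mgf (s.indicator (fun _ => 1)) μ t = 1 + (exp t - 1) * μ.real s := by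
  have h : (fun ω => exp (t * s.indicator (fun _ => 1) ω)) =
      fun ω => s.indicator (fun _ => exp t - 1) ω + 1 := by
    ext ω
    by_cases hω : ω ∈ s <;> simp [hω]
  rw [mgf, h, integral_add ((integrable_const _).indicator hs) (integrable_const 1),
    integral_indicator_const _ hs]
  simp only [smul_eq_mul, integral_const, probReal_univ, mul_one]
  ring

lemma mgf_indicator_one_le_exp {s : Set Ω} (hs : MeasurableSet s) (t : ℝ) :
    mgf (s.indicator (fun _ => 1)) μ t ≤ exp ((exp t - 1) * μ.real s) := by
  rw [mgf_indicator_one hs]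
  linarith [add_one_le_exp ((exp t - 1) * μ.real s)]

variable [Fintype ι]

lemma iIndepSet.mgf_sum_indicator_le_exp (h : iIndepSet A μ) (hA : ∀ i, MeasurableSet (A i))
    (t : ℝ) :
    mgf (∑ i, (A i).indicator (fun _ => 1)) μ t ≤ exp ((exp t - 1) * ∑ i, μ.real (A i)) := by
  rw [h.iIndepFun_indicator.mgf_sum (fun i => measurable_const.indicator (hA i)),
    Finset.mul_sum, exp_sum]
  exact Finset.prod_le_prod (fun i _ => mgf_nonneg) fun i _ => mgf_indicator_one_le_exp (hA i) t

lemma iIndepSet.measureReal_sum_indicator_ge_le_exp_mul (h : iIndepSet A μ)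
    (hA : ∀ i, MeasurableSet (A i)) {t : ℝ} (ht : 0 ≤ t) (a : ℝ) :
    μ.real {ω | a ≤ ∑ i, (A i).indicator (fun _ => 1) ω} ≤
      exp (-t * a + (exp t - 1) * ∑ i, μ.real (A i)) := by
  have hS : Measurable (∑ i, (A i).indicator fun _ => (1 : ℝ)) := by
    rw [Finset.sum_fn]
    exact Finset.measurable_sum _ fun i _ => measurable_const.indicator (hA i)
  have hint : Integrable (fun ω => exp (t * (∑ i, (A i).indicator (fun _ => 1)) ω)) μ := by
    refine .of_bound (hS.const_mul t).exp.aestronglyMeasurable (exp (t * Fintype.card ι))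
      (.of_forall fun ω => ?_)
    rw [norm_of_nonneg (exp_pos _).le, exp_le_exp]
    gcongr
    calc (∑ i, (A i).indicator (fun _ => 1)) ω ≤ ∑ _i : ι, (1 : ℝ) := by
          rw [Finset.sum_apply]
          exact Finset.sum_le_sum fun i _ => Set.indicator_le_self' (fun _ _ => zero_le_one) ω
      _ = Fintype.card ι := by simp
  calc μ.real {ω | a ≤ ∑ i, (A i).indicator (fun _ => 1) ω}
      = μ.real {ω | a ≤ (∑ i, (A i).indicator (fun _ => 1)) ω} := by
        simp only [Finset.sum_apply]
    _ ≤ exp (-t * a) * mgf (∑ i, (A i).indicator (fun _ => 1)) μ t :=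
        measure_ge_le_exp_mul_mgf a ht hint
    _ ≤ exp (-t * a) * exp ((exp t - 1) * ∑ i, μ.real (A i)) := by
      gcongr
      exact h.mgf_sum_indicator_le_exp hA t
    _ = exp (-t * a + (exp t - 1) * ∑ i, μ.real (A i)) := (exp_add _ _).symm

lemma iIndepSet.measureReal_sum_indicator_ge_le (h : iIndepSet A μ)
    (hA : ∀ i, MeasurableSet (A i)) {f a : ℝ} (hf0 : 0 < f) (hf1 : f < 1) (ha : 0 ≤ a)
    (hmean : ∑ i, μ.real (A i) ≤ f * a) :
    μ.real {ω | a ≤ ∑ i, (A i).indicator (fun _ => 1) ω} ≤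
      exp (-(a - f * a) ^ 2 / (f * a + a)) := by
  -- `t = -log f = log (a / (f a))` is the optimal parameter when the mean equals `f a`.
  have ht : 0 ≤ -log f := neg_nonneg.2 (log_nonpos hf0.le hf1.le)
  have hf_inv : 0 ≤ f⁻¹ - 1 := sub_nonneg.2 (one_le_inv₀ hf0 |>.2 hf1.le)
  refine (h.measureReal_sum_indicator_ge_le_exp_mul hA ht a).trans (exp_le_exp.2 ?_)
  calc -(-log f) * a + (exp (-log f) - 1) * ∑ i, μ.real (A i)
      ≤ log f * a + (f⁻¹ - 1) * (f * a) := by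
        rw [neg_neg, exp_neg, exp_log hf0]
        gcongr
    _ = a * (log f + 1 - f) := by
        field_simp
        ring
    _ ≤ -(a - f * a) ^ 2 / (f * a + a) := mul_log_add_one_sub_le hf0 hf1 ha

end ProbabilityTheory

theorem stmt_4_general {Ω : Type*} [MeasureSpace Ω] [IsProbabilityMeasure (ℙ : Measure Ω)]
    (k : ℕ) (f : ℝ) (hf : f ∈ Set.Ico (0:ℝ) 1)
    (xhat : ℝ) (hx : xhat ∈ Set.Icc (0:ℝ) 1)
    {m : ℕ} (A : Fin m → Set Ω) (An En : Set Ω)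
    (hAmeas : ∀ i, MeasurableSet (A i)) (hAnmeas : MeasurableSet An)
    (hind : iIndepSet (fun o : Option (Fin m) => o.elim An A) ℙ)
    (hmean : ∑ i, (ℙ (A i)).toReal ≤ f * k)
    (hAn : ℙ An = ENNReal.ofReal (f * xhat))
    (hsub : An ∩ {ω | (∑ i, (A i).indicator (fun _ => (1:ℝ)) ω) < k} ⊆ En) :
    ENNReal.ofReal (f * (1 - Real.exp (-((k:ℝ) - f * k)^2 / (f * k + k))) * xhat) ≤ ℙ En := by
  obtain ⟨hf0, hf1⟩ := hf
  rcases hf0.eq_or_lt with rfl | hf0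
  · simp
  have htail : (ℙ : Measure Ω).real {ω | (k : ℝ) ≤ ∑ i, (A i).indicator (fun _ => (1 : ℝ)) ω} ≤
      exp (-((k:ℝ) - f * k)^2 / (f * k + k)) :=
    (hind.precomp (Option.some_injective _)).measureReal_sum_indicator_ge_le hAmeas hf0 hf1
      k.cast_nonneg (by simpa [measureReal_def] using hmean)
  set B := {ω | ∑ i, (A i).indicator (fun _ => (1:ℝ)) ω < k}
  have hB : 1 - exp (-((k:ℝ) - f * k)^2 / (f * k + k)) ≤ (ℙ : Measure Ω).real B := by
    have hBmeas : MeasurableSet B := measurableSet_lt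
      (Finset.measurable_sum _ fun i _ => measurable_const.indicator (hAmeas i)) measurable_const
    have hBc : Bᶜ = {ω | (k : ℝ) ≤ ∑ i, (A i).indicator (fun _ => (1 : ℝ)) ω} := by
      ext ω
      simp [B]
    rw [← hBc, probReal_compl_eq_one_sub hBmeas] at htail
    linarith
  calc ENNReal.ofReal (f * (1 - exp (-((k:ℝ) - f * k)^2 / (f * k + k))) * xhat)
      = ℙ An * ENNReal.ofReal (1 - exp (-((k:ℝ) - f * k)^2 / (f * k + k))) := by
        rw [hAn, ← ENNReal.ofReal_mul (mul_nonneg hf0.le hx.1)]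
        ring_nf
    _ ≤ ℙ An * ℙ B := by
        gcongr
        exact ENNReal.ofReal_le_of_le_toReal hB
    _ = ℙ (An ∩ B) := (hind.measure_inter_sum_indicator_lt hAnmeas hAmeas k).symm
    _ ≤ ℙ En := measure_mono hsub

theorem stmt_4 {Ω : Type*} [MeasureSpace Ω] [IsProbabilityMeasure (ℙ : Measure Ω)]
    (k : ℕ) (hk : 1 ≤ k) (f : ℝ) (hf : f ∈ Set.Ico (0:ℝ) 1)
    (xhat : ℝ) (hx : xhat ∈ Set.Icc (0:ℝ) 1)
    {m : ℕ} (A : Fin m → Set Ω) (An En : Set Ω)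
    (hAmeas : ∀ i, MeasurableSet (A i)) (hAnmeas : MeasurableSet An)
    (hEnmeas : MeasurableSet En)
    (hind : iIndepSet (fun o : Option (Fin m) => o.elim An A) ℙ)
    (hmean : ∑ i, (ℙ (A i)).toReal ≤ f * k)
    (hAn : ℙ An = ENNReal.ofReal (f * xhat))
    (hsub : An ∩ {ω | (∑ i, (A i).indicator (fun _ => (1:ℝ)) ω) < k} ⊆ En) :
    ENNReal.ofReal (f * (1 - Real.exp (-((k:ℝ) - f * k)^2 / (f * k + k))) * xhat) ≤ ℙ En :=
  stmt_4_general k f hf xhat hx A An En hAmeas hAnmeas hind hmean hAn hsub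
end

section
/- Let $\phi : [0,1] \to \mathbb{R}$ be continuous, increasing, and positive, and let $\alpha > 0$, $d > 0$, $z_L \in (0,1]$. Define $\mathfrak{L}(z_1) = \frac{2\alpha}{3} z_1 \phi(z_1) - \frac{\alpha}{3} z_L \phi(z_1) + \int_{z_1}^{z_L} \frac{2\alpha}{3}\phi(\eta)\,d\eta + \frac{\alpha}{3} d \max\{0, c - z_L\}$ for $z_1 \in (0, z_L]$, where $c \ge 0$ is a constant. Then $\inf_{z_1 \in (0, z_L]} \mathfrak{L}(z_1) \ge \min\{\mathfrak{L}(z_L/2),\ \mathfrak{L}(z_L)\}$. -/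
theorem stmt_9 (φ : ℝ → ℝ) (hcont : ContinuousOn φ (Set.Icc 0 1))
    (hmono : MonotoneOn φ (Set.Icc 0 1)) (hpos : ∀ y ∈ Set.Icc (0:ℝ) 1, 0 < φ y)
    (α d c zL : ℝ) (hα : 0 < α) (hd : 0 < d) (hc : 0 ≤ c) (hzL : zL ∈ Set.Ioc (0:ℝ) 1)
    (L : ℝ → ℝ)
    (hL : ∀ z1, L z1 = (2 * α / 3) * z1 * φ z1 - (α / 3) * zL * φ z1
        + (∫ η in z1..zL, (2 * α / 3) * φ η) + (α / 3) * d * max 0 (c - zL)) :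
    ∀ z1 ∈ Set.Ioc (0:ℝ) zL, min (L (zL / 2)) (L zL) ≤ L z1 := by
  obtain ⟨hzL0, hzL1⟩ := hzL
  intro z1 hz1
  obtain ⟨hz10, hz1L⟩ := hz1
  set m : ℝ := zL / 2 with hm
  have hm0 : 0 < m := by positivity
  have hmL : m ≤ zL := by simp only [hm]; linarith
  have hz11 : z1 ≤ 1 := hz1L.trans hzL1
  have hmem : ∀ x : ℝ, 0 ≤ x → x ≤ 1 → x ∈ Set.Icc (0:ℝ) 1 := fun x h1 h2 => ⟨h1, h2⟩
  have hint : ∀ a b : ℝ, 0 ≤ a → a ≤ 1 → 0 ≤ b → b ≤ 1 →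
      IntervalIntegrable φ MeasureTheory.volume a b := by
    intro a b ha0 ha1 hb0 hb1
    exact (hcont.mono (Set.uIcc_subset_Icc ⟨ha0, ha1⟩ ⟨hb0, hb1⟩)).intervalIntegrable
  -- key bound : (m - z1) * φ z1 ≤ ∫ φ from z1 to m
  have hJ : (m - z1) * φ z1 ≤ ∫ η in z1..m, φ η := by
    rcases le_or_gt z1 m with h | h
    · have := intervalIntegral.integral_mono_on h (intervalIntegrable_const (c := φ z1))
        (hint z1 m hz10.le hz11 hm0.le (by linarith))
        (fun x hx => hmono ⟨hz10.le, hz11⟩ ⟨le_trans hz10.le hx.1, le_trans hx.2 (by linarith)⟩ hx.1)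
      simpa [smul_eq_mul, mul_comm] using this
    · have h' : m ≤ z1 := h.le
      have := intervalIntegral.integral_mono_on h'
        (hint m z1 hm0.le (by linarith) hz10.le hz11)
        (intervalIntegrable_const (c := φ z1))
        (fun x hx => hmono ⟨le_trans hm0.le hx.1, le_trans hx.2 hz11⟩ ⟨hz10.le, hz11⟩ hx.2)
      rw [intervalIntegral.integral_symm]
      simp only [intervalIntegral.integral_const, smul_eq_mul] at this ⊢
      nlinarith [this]
  have hsplit : (∫ η in z1..m, φ η) + (∫ η in m..zL, φ η) = ∫ η in z1..zL, φ η :=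
    intervalIntegral.integral_add_adjacent_intervals
      (hint z1 m hz10.le hz11 hm0.le (by linarith))
      (hint m zL hm0.le (by linarith) hzL0.le hzL1)
  have hcm1 : (∫ η in z1..zL, (2 * α / 3) * φ η) = (2 * α / 3) * ∫ η in z1..zL, φ η :=
    intervalIntegral.integral_const_mul _ _
  have hcm2 : (∫ η in m..zL, (2 * α / 3) * φ η) = (2 * α / 3) * ∫ η in m..zL, φ η :=
    intervalIntegral.integral_const_mul _ _
  have key : L m ≤ L z1 := by
    rw [hL m, hL z1, hcm1, hcm2, ← hsplit]
    have h2 : (0:ℝ) ≤ 2 * α / 3 := by positivity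
    rw [hm] at hJ ⊢
    nlinarith [mul_le_mul_of_nonneg_left hJ h2]
  exact le_trans (min_le_left _ _) key
end

section
/- Let $\phi : [0,1] \to \mathbb{R}$ be continuous, increasing, and positive; let $\alpha > 0$ and $d > 0$ satisfy, for some $c \in [0,1]$ with $\phi(c) \le d$: (i) $\int_{z/2}^{z} \frac{2\alpha}{3}\phi(\eta)\,d\eta + \frac{\alpha}{3} d \max\{0, c - z\} \ge d$ for all $z \in (0, c]$, and (ii) $\frac{\alpha}{3} z \phi(z) + \frac{\alpha}{3} d \max\{0, c - z\} \ge d$ for all $z \in (0, c]$. Then for all $z_1, z_L$ with $0 < z_1 \le z_L \le c$: $\frac{2\alpha}{3} z_1 \phi(z_1) - \frac{\alpha}{3} z_L \phi(z_1) + \int_{z_1}^{z_L} \frac{2\alpha}{3}\phi(\eta)\,d\eta + \frac{\alpha}{3} d \max\{0, c - z_L\} \ge d$. -/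
theorem stmt_18 (φ : ℝ → ℝ) (hcont : ContinuousOn φ (Set.Icc 0 1))
    (hmono : MonotoneOn φ (Set.Icc 0 1)) (hpos : ∀ y ∈ Set.Icc (0:ℝ) 1, 0 < φ y)
    (α d c : ℝ) (hα : 0 < α) (hd : 0 < d) (hc : c ∈ Set.Icc (0:ℝ) 1) (hφc : φ c ≤ d)
    (h1 : ∀ z ∈ Set.Ioc (0:ℝ) c,
      d ≤ (∫ η in (z / 2)..z, (2 * α / 3) * φ η) + (α / 3) * d * max 0 (c - z))
    (h2 : ∀ z ∈ Set.Ioc (0:ℝ) c,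
      d ≤ (α / 3) * z * φ z + (α / 3) * d * max 0 (c - z)) :
    ∀ z1 zL : ℝ, 0 < z1 → z1 ≤ zL → zL ≤ c →
      d ≤ (2 * α / 3) * z1 * φ z1 - (α / 3) * zL * φ z1
        + (∫ η in z1..zL, (2 * α / 3) * φ η) + (α / 3) * d * max 0 (c - zL) := by
  intro z1 zL hz1 hz1L hzLc
  obtain ⟨hc0, hc1⟩ := hc
  have hzL0 : 0 < zL := lt_of_lt_of_le hz1 hz1L
  have hzL1 : zL ≤ 1 := hzLc.trans hc1
  have hint : ∀ a b : ℝ, a ∈ Set.Icc (0:ℝ) 1 → b ∈ Set.Icc (0:ℝ) 1 →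
      IntervalIntegrable (fun η => (2 * α / 3) * φ η) MeasureTheory.volume a b := by
    intro a b ha hb
    exact (continuousOn_const.mul (hcont.mono (Set.uIcc_subset_Icc ha hb))).intervalIntegrable
  have hmz1 : z1 ∈ Set.Icc (0:ℝ) 1 := ⟨hz1.le, hz1L.trans hzL1⟩
  have hmzL : zL ∈ Set.Icc (0:ℝ) 1 := ⟨hzL0.le, hzL1⟩
  have hmzh : zL / 2 ∈ Set.Icc (0:ℝ) 1 := ⟨by linarith, by linarith⟩
  have hsplit : (∫ η in z1..zL, (2 * α / 3) * φ η)
      = (∫ η in z1..(zL/2), (2 * α / 3) * φ η) + ∫ η in (zL/2)..zL, (2 * α / 3) * φ η :=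
    (intervalIntegral.integral_add_adjacent_intervals (hint _ _ hmz1 hmzh)
      (hint _ _ hmzh hmzL)).symm
  have hφz1 : 0 < φ z1 := hpos z1 hmz1
  have hkey : 0 ≤ (α / 3) * (2 * z1 - zL) * φ z1 + ∫ η in z1..(zL/2), (2 * α / 3) * φ η := by
    rcases le_total z1 (zL / 2) with h | h
    · have hb : (∫ η in z1..(zL/2), (2 * α / 3) * φ z1)
          ≤ ∫ η in z1..(zL/2), (2 * α / 3) * φ η := by
        apply intervalIntegral.integral_mono_on h
          (intervalIntegrable_const) (hint _ _ hmz1 hmzh)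
        intro x hx
        have hxm : x ∈ Set.Icc (0:ℝ) 1 := ⟨le_trans hz1.le hx.1, le_trans hx.2 hmzh.2⟩
        exact mul_le_mul_of_nonneg_left (hmono hmz1 hxm hx.1) (by positivity)
      rw [intervalIntegral.integral_const, smul_eq_mul] at hb
      nlinarith [hb]
    · have hb : (∫ η in (zL/2)..z1, (2 * α / 3) * φ η)
          ≤ ∫ η in (zL/2)..z1, (2 * α / 3) * φ z1 := by
        apply intervalIntegral.integral_mono_on h
          (hint _ _ hmzh hmz1) (intervalIntegrable_const)
        intro x hx
        have hxm : x ∈ Set.Icc (0:ℝ) 1 := ⟨le_trans hmzh.1 hx.1, le_trans hx.2 hmz1.2⟩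
        exact mul_le_mul_of_nonneg_left (hmono hxm hmz1 hx.2) (by positivity)
      rw [intervalIntegral.integral_const, smul_eq_mul] at hb
      rw [intervalIntegral.integral_symm]
      nlinarith [hb]
  have h1L := h1 zL ⟨hzL0, hzLc⟩
  rw [hsplit]
  nlinarith [h1L, hkey]
end
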